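/- arXiv:1901.05750 — 3 statements merged into one kernel-verified Lean document; each statement's English description precedes it below -/
import Mathlib

section
/- Let (X, •, 1) be a commutative monoid and U ⊆ X a subset such that no element of U divides 1. Then the PCM over X induced by U, namely (X|_U, •_U, {1}), is a partial commutative monoid: (i) 1 ∈ X|_U and x •_U 1 = x for every x ∈ X|_U; (ii) •_U is commutative; (iii) •_U is associative in the Kleene sense: for all x, y, z ∈ X|_U, the composite (x •_U y) •_U z is defined iff x •_U (y •_U z) is defined, and when defined both sides equal x • y • z. -/
/- The induced partial composition on `X|_U`: `x •_U y = x * y` if `x * y ∈ X|_U`,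
undefined otherwise. -/
open Classical in
noncomputable def compU {M : Type*} [CommMonoid M] (U : Set M) (x y : M) : Option M :=
  if ∀ u ∈ U, ¬ u ∣ x * y then some (x * y) else none

/- Divisibility by a member of `U` passes from `x * y` to `x * y * z`, so `(x •_U y) •_U z` is
defined exactly when `x * y * z ∈ X|_U`; by commutativity the same holds for `x •_U (y •_U z)`. -/

namespace compU

variable {M : Type*} [CommMonoid M] (U : Set M)

theorem congr_mul {a b c d : M} (h : a * b = c * d) : compU U a b = compU U c d := by
  rw [compU, compU, h]

theorem comm (x y : M) : compU U x y = compU U y x :=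
  congr_mul U (mul_comm x y)

theorem eq_some_of_isSome {x y : M} (h : (compU U x y).isSome) :
    compU U x y = some (x * y) := by
  unfold compU at h ⊢
  split_ifs at h ⊢
  · rfl
  · simp at h

theorem one_right {x : M} (hx : ∀ u ∈ U, ¬ u ∣ x) : compU U x 1 = some x := by
  rw [compU, if_pos (by simpa only [mul_one] using hx), mul_one]

theorem bind_left (x y z : M) :
    ((compU U x y).bind fun w => compU U w z) = compU U (x * y) z := by
  unfold compU
  by_cases hxy : ∀ u ∈ U, ¬ u ∣ x * y
  · rw [if_pos hxy, Option.bind_some]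
  · have hxyz : ¬ ∀ u ∈ U, ¬ u ∣ x * y * z :=
      fun h => hxy fun u hu hdvd => h u hu (hdvd.mul_right z)
    rw [if_neg hxy, if_neg hxyz, Option.bind_none]

theorem bind_right (x y z : M) :
    ((compU U y z).bind fun w => compU U x w) = compU U (x * y) z := by
  have hswap : (fun w => compU U x w) = fun w => compU U w x := funext (comm U x)
  rw [hswap, comm U y z, bind_left]
  exact congr_mul U (by ac_rfl)

end compU

/-- The PCM over `X` induced by `U` is a partial commutative monoid, provided no
element of `U` divides `1`. -/
theorem induced_pcm {M : Type*} [CommMonoid M] (U : Set M)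
    (hU : ∀ u ∈ U, ¬ u ∣ (1 : M)) :
    -- (i) 1 is in the carrier and is a unit
    ((1 : M) ∈ {z : M | ∀ u ∈ U, ¬ u ∣ z}) ∧
    (∀ x ∈ {z : M | ∀ u ∈ U, ¬ u ∣ z}, compU U x 1 = some x) ∧
    -- (ii) commutativity
    (∀ x ∈ {z : M | ∀ u ∈ U, ¬ u ∣ z}, ∀ y ∈ {z : M | ∀ u ∈ U, ¬ u ∣ z},
      compU U x y = compU U y x) ∧
    -- (iii) Kleene associativity, with both sides equal to x * y * z when defined
    (∀ x ∈ {z : M | ∀ u ∈ U, ¬ u ∣ z}, ∀ y ∈ {z : M | ∀ u ∈ U, ¬ u ∣ z},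
      ∀ z ∈ {w : M | ∀ u ∈ U, ¬ u ∣ w},
      (((compU U x y).bind fun w => compU U w z).isSome ↔
        ((compU U y z).bind fun w => compU U x w).isSome) ∧
      (((compU U x y).bind fun w => compU U w z).isSome →
        ((compU U x y).bind fun w => compU U w z) = some (x * y * z)) ∧
      (((compU U y z).bind fun w => compU U x w).isSome →
        ((compU U y z).bind fun w => compU U x w) = some (x * y * z))) := by
  refine ⟨hU, fun x hx => compU.one_right U hx, fun x _ y _ => compU.comm U x y,
    fun x _ y _ z _ => ?_⟩
  rw [compU.bind_left, compU.bind_right]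
  exact ⟨Iff.rfl, compU.eq_some_of_isSome U, compU.eq_some_of_isSome U⟩
end

section
/- Let (M, •, 1) be a cancellative commutative monoid. The subjective composition ⊛ on M × M is associative in the Kleene sense: for all p₁ = (o₁, e₁), p₂ = (o₂, e₂), p₃ = (o₃, e₃) in M × M, the composite (p₁ ⊛ p₂) ⊛ p₃ is defined iff p₁ ⊛ (p₂ ⊛ p₃) is defined, and then both are equal; indeed, both are defined iff there exists e' ∈ M with e₁ = o₂ • o₃ • e', e₂ = o₁ • o₃ • e', and e₃ = o₁ • o₂ • e', in which case both sides equal (o₁ • o₂ • o₃, e'). -/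
/-!
Because the monoid is cancellative, the witness of a defined composite is unique, so
`p ⊛ q = (o, e)` is equivalent to the equations `o = o_p • o_q`, `e_p = o_q • e`,
`e_q = o_p • e`. Unfolding either bracketing and eliminating the intermediate pair gives the
same system in `(o, e)`, symmetric in the three factors, which is the common witness condition.
-/

/- Subjective composition of (local obligations, environment obligations) pairs over a
cancellative commutative monoid. -/
open Classical in
noncomputable def scomp {M : Type*} [CancelCommMonoid M] (p q : M × M) : Option (M × M) :=
  if h : ∃ e, p.2 = q.1 * e ∧ q.2 = p.1 * e then some (p.1 * q.1, h.choose) else none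

section
variable {M : Type*} [CancelCommMonoid M]

theorem scomp_eq_some_iff {p q : M × M} {o e : M} :
    scomp p q = some (o, e) ↔ o = p.1 * q.1 ∧ p.2 = q.1 * e ∧ q.2 = p.1 * e := by
  unfold scomp
  split_ifs with h
  · have hc := h.choose_spec
    simp only [Option.some.injEq, Prod.mk.injEq]
    constructor
    · rintro ⟨rfl, rfl⟩
      exact ⟨rfl, hc⟩
    · rintro ⟨rfl, h₁, -⟩
      exact ⟨rfl, mul_left_cancel (hc.1.symm.trans h₁)⟩
  · simp only [false_iff]
    exact fun ⟨_, h₁, h₂⟩ => h ⟨e, h₁, h₂⟩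

theorem scomp_bind_scomp_eq_some_iff {p₁ p₂ p₃ : M × M} {o e : M} :
    ((scomp p₁ p₂).bind fun p => scomp p p₃) = some (o, e) ↔
      o = p₁.1 * p₂.1 * p₃.1 ∧ p₁.2 = p₂.1 * p₃.1 * e ∧ p₂.2 = p₁.1 * p₃.1 * e ∧
        p₃.2 = p₁.1 * p₂.1 * e := by
  simp only [Option.bind_eq_some_iff, Prod.exists, scomp_eq_some_iff]
  constructor
  · rintro ⟨_, _, ⟨rfl, h₁, h₂⟩, rfl, rfl, h₃⟩
    exact ⟨rfl, by rw [h₁, mul_assoc], by rw [h₂, mul_assoc], h₃⟩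
  · rintro ⟨rfl, h₁, h₂, h₃⟩
    exact ⟨_, p₃.1 * e, ⟨rfl, by rw [h₁, mul_assoc], by rw [h₂, mul_assoc]⟩, rfl, rfl, h₃⟩

theorem scomp_scomp_bind_eq_some_iff {p₁ p₂ p₃ : M × M} {o e : M} :
    ((scomp p₂ p₃).bind fun p => scomp p₁ p) = some (o, e) ↔
      o = p₁.1 * p₂.1 * p₃.1 ∧ p₁.2 = p₂.1 * p₃.1 * e ∧ p₂.2 = p₁.1 * p₃.1 * e ∧
        p₃.2 = p₁.1 * p₂.1 * e := by
  simp only [Option.bind_eq_some_iff, Prod.exists, scomp_eq_some_iff]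
  constructor
  · rintro ⟨_, _, ⟨rfl, h₂, h₃⟩, rfl, h₁, rfl⟩
    exact ⟨(mul_assoc ..).symm, h₁, by rw [h₂, mul_left_comm, mul_assoc],
      by rw [h₃, mul_left_comm, mul_assoc]⟩
  · rintro ⟨rfl, h₁, h₂, h₃⟩
    exact ⟨_, p₁.1 * e, ⟨rfl, by rw [h₂]; ac_rfl, by rw [h₃]; ac_rfl⟩, mul_assoc .., h₁, rfl⟩

end

/-- The subjective composition is associative in the Kleene sense, and both sides are
defined exactly when a common witness `e'` exists, in which case both sides equal
`(o₁ * o₂ * o₃, e')`. -/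
theorem scomp_assoc {M : Type*} [CancelCommMonoid M] (p₁ p₂ p₃ : M × M) :
    (((scomp p₁ p₂).bind fun p => scomp p p₃).isSome ↔
      ((scomp p₂ p₃).bind fun p => scomp p₁ p).isSome) ∧
    (((scomp p₁ p₂).bind fun p => scomp p p₃) =
      ((scomp p₂ p₃).bind fun p => scomp p₁ p)) ∧
    (((scomp p₁ p₂).bind fun p => scomp p p₃).isSome ↔
      ∃ e', p₁.2 = p₂.1 * p₃.1 * e' ∧ p₂.2 = p₁.1 * p₃.1 * e' ∧
        p₃.2 = p₁.1 * p₂.1 * e') ∧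
    (∀ e' : M, p₁.2 = p₂.1 * p₃.1 * e' → p₂.2 = p₁.1 * p₃.1 * e' →
      p₃.2 = p₁.1 * p₂.1 * e' →
      ((scomp p₁ p₂).bind fun p => scomp p p₃) = some (p₁.1 * p₂.1 * p₃.1, e') ∧
      ((scomp p₂ p₃).bind fun p => scomp p₁ p) = some (p₁.1 * p₂.1 * p₃.1, e')) := by
  have h_eq : ((scomp p₁ p₂).bind fun p => scomp p p₃) =
      ((scomp p₂ p₃).bind fun p => scomp p₁ p) :=
    Option.ext fun ⟨o, e⟩ => by
      rw [scomp_bind_scomp_eq_some_iff, scomp_scomp_bind_eq_some_iff]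
  have h_isSome : ((scomp p₁ p₂).bind fun p => scomp p p₃).isSome ↔
      ∃ e', p₁.2 = p₂.1 * p₃.1 * e' ∧ p₂.2 = p₁.1 * p₃.1 * e' ∧ p₃.2 = p₁.1 * p₂.1 * e' := by
    simp only [Option.isSome_iff_exists, Prod.exists, scomp_bind_scomp_eq_some_iff,
      exists_and_left, exists_eq_left]
  refine ⟨by rw [h_eq], h_eq, h_isSome, fun e' h₁ h₂ h₃ => ?_⟩
  have h_lhs := scomp_bind_scomp_eq_some_iff.mpr ⟨rfl, h₁, h₂, h₃⟩
  exact ⟨h_lhs, h_eq ▸ h_lhs⟩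
end

section
/- Let (M, •, 1) be a cancellative commutative monoid. For all O₁, O₂, e ∈ M, the subjective composition (O₁, O₂ • e) ⊛ (O₂, O₁ • e) is defined and equals (O₁ • O₂, e). (This is the model-level content of the TaDA Live derived law ⊢ ⌊O₁ • O₂⌋ ⇔ (⌊O₁⌋ ∗ ⌈O₂⌉) ∗ (⌈O₁⌉ ∗ ⌊O₂⌋): a composite local obligation can be delegated between two threads, each retaining knowledge of the obligations delegated to the other.) -/
/-- `(O₁, O₂ * e) ⊛ (O₂, O₁ * e) = (O₁ * O₂, e)`: the model-level content of the
derived law `⊢ ⌊O₁ • O₂⌋ ⇔ (⌊O₁⌋ ∗ ⌈O₂⌉) ∗ (⌈O₁⌉ ∗ ⌊O₂⌋)`. -/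
theorem scomp_delegate {M : Type*} [CancelCommMonoid M] (O₁ O₂ e : M) :
    scomp (O₁, O₂ * e) (O₂, O₁ * e) = some (O₁ * O₂, e) := by
  have h : ∃ e', (O₁, O₂ * e).2 = (O₂, O₁ * e).1 * e' ∧ (O₂, O₁ * e).2 = (O₁, O₂ * e).1 * e' :=
    ⟨e, rfl, rfl⟩
  rw [scomp, dif_pos h]
  have := h.choose_spec.1
  simp only at this
  have : h.choose = e := mul_left_cancel this.symm
  rw [this]
end
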